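/- Let 𝒯 be a triangle family with |𝒯| = t > 0 and λ(𝒯) > 2, and let v and e denote respectively the number of vertices and the number of edges of the support graph Γ₀(𝒯). Then v ≤ 2e/(⌈λ(𝒯)⌉ − 1), e ≤ 3t/(⌈λ(𝒯)⌉ − 2), and v ≤ 6t/((⌈λ(𝒯)⌉ − 1)(⌈λ(𝒯)⌉ − 2)). -/

import Mathlib

/-
Let d(e) be the number of triangles containing the edge e, and put M = δ₁ᵀδ₁. For the indicator
vector x of e one has ⟨x, Mx⟩ = d(e), and Mx, the e-th column of M, has squared norm at most
d(e)(d(e) + 2): two distinct edges lie in at most one common triangle, and e shares a triangle with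
exactly 2 d(e) other edges. Expanding x in an eigenbasis of M yields a positive eigenvalue μ with
μ ⟨x, Mx⟩ ≤ ‖Mx‖², hence λ ≤ d(e) + 2, i.e. every edge lies in at least ⌈λ⌉ - 2 triangles.
An endpoint v of e lies in at least d(e) + 1 edges, since removing the other endpoint of e maps
the triangles through e injectively to edges through v other than e. Double counting the
edge-triangle and vertex-edge incidences then gives e(⌈λ⌉ - 2) ≤ 3t and v(⌈λ⌉ - 1) ≤ 2e.
-/

open Finset Matrix

/-- The sign `[T : e]` of an edge `e` in a triangle `T`. -/
noncomputable def triSign (T e : Finset ℕ) : ℝ :=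
  if e ⊆ T ∧ e.card = 2 ∧ T.card = 3 then
    if (T \ e).max = T.max ∨ (T \ e).min = T.min then 1 else -1
  else 0

/-- A triangle family: a nonempty finite set of 3-element subsets of ℕ. -/
def IsTriFam (F : Finset (Finset ℕ)) : Prop :=
  F.Nonempty ∧ ∀ T ∈ F, T.card = 3

/-- The edges of the support graph of a triangle family. -/
def edgesOf (F : Finset (Finset ℕ)) : Finset (Finset ℕ) :=
  F.biUnion fun T => T.powersetCard 2

/-- The vertices of the support graph of a triangle family. -/
def vertsOf (F : Finset (Finset ℕ)) : Finset ℕ :=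
  F.biUnion id

/-- The signed edge-triangle incidence matrix of a triangle family. -/
noncomputable def delta1 (F : Finset (Finset ℕ)) :
    Matrix {T // T ∈ F} {e // e ∈ edgesOf F} ℝ :=
  Matrix.of fun T e => triSign T.1 e.1

/-- The smallest positive eigenvalue of a matrix. -/
noncomputable def lambdaMinPos {m : Type*} [Fintype m] (M : Matrix m m ℝ) : ℝ :=
  sInf {μ : ℝ | 0 < μ ∧ ∃ v : m → ℝ, v ≠ 0 ∧ M.mulVec v = μ • v}

/-- `λ(𝒯)`: the smallest positive eigenvalue of `δ₁(𝒯)ᵀ δ₁(𝒯)`. -/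
noncomputable def lam (F : Finset (Finset ℕ)) : ℝ :=
  lambdaMinPos ((delta1 F)ᵀ * delta1 F)

/-- The neighborhood of `x` in the support graph `Γ₀(F)`. -/
def nbrs (F : Finset (Finset ℕ)) (x : ℕ) : Finset ℕ :=
  (vertsOf F).filter fun y => x ≠ y ∧ ∃ T ∈ F, x ∈ T ∧ y ∈ T

/-- `φ(t)`: the maximum of `λ(𝒯)` over triangle families with `|𝒯| = t`. -/
noncomputable def phi (t : ℕ) : ℝ :=
  sSup {r : ℝ | ∃ F : Finset (Finset ℕ), IsTriFam F ∧ F.card = t ∧ lam F = r}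

/-- `Λ(t) = max_{1 ≤ s ≤ t} φ(s)`. -/
noncomputable def Lam (t : ℕ) : ℝ :=
  sSup {r : ℝ | ∃ s : ℕ, 1 ≤ s ∧ s ≤ t ∧ phi s = r}

/-- `H(n) = min{ s ≥ 1 : φ(C(n,3)+s) > n - 1 }`. -/
noncomputable def Hfun (n : ℕ) : ℕ :=
  sInf {s : ℕ | 1 ≤ s ∧ (n : ℝ) - 1 < phi (n.choose 3 + s)}

/-- The triangle family `𝒯_{c,b}`: all 3-cliques of `K_c ∨ (b isolated vertices)`. -/
def Tcb (c b : ℕ) : Finset (Finset ℕ) :=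
  ((Finset.Icc 1 c).powersetCard 3) ∪
    (Finset.Icc (c+1) (c+b)).biUnion
      (fun i => ((Finset.Icc 1 c).powersetCard 2).image (fun p => insert i p))

lemma lambdaMinPos_le {m : Type*} [Fintype m] {M : Matrix m m ℝ} {μ : ℝ} (hμ : 0 < μ)
    {v : m → ℝ} (hv : v ≠ 0) (hMv : M *ᵥ v = μ • v) : lambdaMinPos M ≤ μ :=
  csInf_le ⟨0, fun _ h => h.1.le⟩ ⟨hμ, v, hv, hMv⟩

namespace Matrix

variable {n : Type*} [Fintype n]

lemma dotProduct_eq_sum_orthonormalBasis (b : OrthonormalBasis n ℝ (EuclideanSpace ℝ n))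
    (x y : n → ℝ) : x ⬝ᵥ y = ∑ i, (b i ⬝ᵥ x) * (b i ⬝ᵥ y) := by
  have h := b.sum_inner_mul_inner (WithLp.toLp 2 x) (WithLp.toLp 2 y)
  simp only [EuclideanSpace.inner_eq_star_dotProduct, star_trivial] at h
  simpa [dotProduct_comm] using h.symm

variable [DecidableEq n] {M : Matrix n n ℝ}

lemma IsHermitian.eigenvectorBasis_dotProduct_mulVec (hM : M.IsHermitian) (i : n) (x : n → ℝ) :
    hM.eigenvectorBasis i ⬝ᵥ (M *ᵥ x) = hM.eigenvalues i * (hM.eigenvectorBasis i ⬝ᵥ x) := by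
  rw [dotProduct_mulVec, ← mulVec_transpose, ← conjTranspose_eq_transpose_of_trivial, hM.eq,
    hM.mulVec_eigenvectorBasis, smul_dotProduct, smul_eq_mul]

lemma IsHermitian.exists_eigenvalue_pos_mul_le (hM : M.IsHermitian) {x : n → ℝ}
    (hx : 0 < x ⬝ᵥ (M *ᵥ x)) :
    ∃ i, 0 < hM.eigenvalues i ∧
      hM.eigenvalues i * (x ⬝ᵥ (M *ᵥ x)) ≤ (M *ᵥ x) ⬝ᵥ (M *ᵥ x) := by
  set μ := hM.eigenvalues
  set c : n → ℝ := fun i => hM.eigenvectorBasis i ⬝ᵥ x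
  have hq : x ⬝ᵥ (M *ᵥ x) = ∑ i, μ i * c i ^ 2 := by
    rw [dotProduct_eq_sum_orthonormalBasis hM.eigenvectorBasis x (M *ᵥ x)]
    simp only [hM.eigenvectorBasis_dotProduct_mulVec]
    exact Finset.sum_congr rfl fun i _ => by ring
  have hr : (M *ᵥ x) ⬝ᵥ (M *ᵥ x) = ∑ i, μ i ^ 2 * c i ^ 2 := by
    rw [dotProduct_eq_sum_orthonormalBasis hM.eigenvectorBasis (M *ᵥ x) (M *ᵥ x)]
    simp only [hM.eigenvectorBasis_dotProduct_mulVec]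
    exact Finset.sum_congr rfl fun i _ => by ring
  set q := x ⬝ᵥ (M *ᵥ x)
  set r := (M *ᵥ x) ⬝ᵥ (M *ᵥ x)
  have hr0 : 0 ≤ r := by rw [hr]; positivity
  by_contra! h
  obtain ⟨j, -, hj⟩ := Finset.exists_lt_of_sum_lt (by simpa [← hq] using hx :
    ∑ _i : n, (0 : ℝ) < ∑ i, μ i * c i ^ 2)
  have hμj : 0 < μ j := by nlinarith [sq_nonneg (c j), h j]
  -- if every positive eigenvalue exceeded r / q, then q μᵢ² cᵢ² ≥ r μᵢ cᵢ² termwise, strictly at j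
  have hlt : ∑ i, r * (μ i * c i ^ 2) < ∑ i, q * (μ i ^ 2 * c i ^ 2) := by
    refine Finset.sum_lt_sum (fun i _ => ?_) ⟨j, Finset.mem_univ j, ?_⟩
    · rcases le_or_gt (μ i) 0 with hμ | hμ
      · nlinarith [mul_nonneg hr0 (sq_nonneg (c i)), sq_nonneg (μ i * c i)]
      · nlinarith [h i hμ, mul_nonneg hμ.le (sq_nonneg (c i))]
    · nlinarith [h j hμj]
  rw [← Finset.mul_sum, ← Finset.mul_sum, ← hq, ← hr] at hlt
  linarith

lemma IsHermitian.lambdaMinPos_mul_le (hM : M.IsHermitian) {x : n → ℝ}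
    (hx : 0 < x ⬝ᵥ (M *ᵥ x)) : lambdaMinPos M * (x ⬝ᵥ (M *ᵥ x)) ≤ (M *ᵥ x) ⬝ᵥ (M *ᵥ x) := by
  obtain ⟨i, hi, hle⟩ := hM.exists_eigenvalue_pos_mul_le hx
  have hv : (hM.eigenvectorBasis i : n → ℝ) ≠ 0 := by
    simpa using hM.eigenvectorBasis.orthonormal.ne_zero i
  exact (mul_le_mul_of_nonneg_right
    (lambdaMinPos_le hi hv (hM.mulVec_eigenvectorBasis i)) hx.le).trans hle

end Matrix

def edgeDeg (F : Finset (Finset ℕ)) (e : Finset ℕ) : ℕ := #{T ∈ F | e ⊆ T}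

def vertDeg (F : Finset (Finset ℕ)) (x : ℕ) : ℕ := #{f ∈ edgesOf F | x ∈ f}

section TriangleFamily

variable {F : Finset (Finset ℕ)} {T e f : Finset ℕ}

lemma triSign_of_not_subset (h : ¬e ⊆ T) : triSign T e = 0 :=
  if_neg fun hc => h hc.1

lemma triSign_mul_self (heT : e ⊆ T) (he : e.card = 2) (hT : T.card = 3) :
    triSign T e * triSign T e = 1 := by
  rw [triSign, if_pos ⟨heT, he, hT⟩]
  split <;> norm_num

lemma abs_triSign_le_one : |triSign T e| ≤ 1 := by
  unfold triSign
  split_ifs <;> norm_num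

lemma mem_edgesOf : e ∈ edgesOf F ↔ ∃ T ∈ F, e ⊆ T ∧ e.card = 2 := by
  simp [edgesOf, mem_powersetCard]

lemma card_eq_two_of_mem_edgesOf (he : e ∈ edgesOf F) : e.card = 2 := by
  obtain ⟨-, -, -, h⟩ := mem_edgesOf.mp he
  exact h

lemma filter_edgesOf_subset (hT : T ∈ F) : {f ∈ edgesOf F | f ⊆ T} = T.powersetCard 2 := by
  ext f
  simp only [mem_filter, mem_powersetCard, mem_edgesOf]
  exact ⟨fun ⟨⟨_, _, _, hc⟩, hf⟩ => ⟨hf, hc⟩, fun ⟨hf, hc⟩ => ⟨⟨T, hT, hf, hc⟩, hf⟩⟩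

lemma subset_vertsOf (he : e ∈ edgesOf F) : e ⊆ vertsOf F := by
  obtain ⟨T, hT, heT, -⟩ := mem_edgesOf.mp he
  exact heT.trans (subset_biUnion_of_mem id hT)

lemma sum_edgeDeg (hF : ∀ T ∈ F, T.card = 3) : ∑ e ∈ edgesOf F, edgeDeg F e = 3 * #F := by
  calc ∑ e ∈ edgesOf F, edgeDeg F e
      = ∑ T ∈ F, #{f ∈ edgesOf F | f ⊆ T} := by
        unfold edgeDeg
        exact sum_card_bipartiteAbove_eq_sum_card_bipartiteBelow (s := edgesOf F) (t := F) (· ⊆ ·)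
    _ = ∑ _T ∈ F, 3 := sum_congr rfl fun T hT => by
        rw [filter_edgesOf_subset hT, card_powersetCard, hF T hT]; rfl
    _ = 3 * #F := by rw [sum_const, smul_eq_mul, mul_comm]

lemma sum_vertDeg : ∑ x ∈ vertsOf F, vertDeg F x = 2 * #(edgesOf F) := by
  calc ∑ x ∈ vertsOf F, vertDeg F x
      = ∑ f ∈ edgesOf F, #{x ∈ vertsOf F | x ∈ f} := by
        unfold vertDeg
        exact sum_card_bipartiteAbove_eq_sum_card_bipartiteBelow (s := vertsOf F) (t := edgesOf F)
          (· ∈ ·)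
    _ = ∑ _f ∈ edgesOf F, 2 := sum_congr rfl fun f hf => by
        rw [filter_mem_eq_inter, inter_eq_right.mpr (subset_vertsOf hf),
          card_eq_two_of_mem_edgesOf hf]
    _ = 2 * #(edgesOf F) := by rw [sum_const, smul_eq_mul, mul_comm]

lemma card_filter_subset_subset_le_one (hF : ∀ T ∈ F, T.card = 3) (he : e.card = 2)
    (hf : f.card = 2) (hef : e ≠ f) : #{T ∈ F | e ⊆ T ∧ f ⊆ T} ≤ 1 := by
  have hunion : 3 ≤ #(e ∪ f) := by
    have hss : e ⊂ e ∪ f := Finset.ssubset_iff_subset_ne.mpr ⟨subset_union_left, fun h =>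
      hef (eq_of_subset_of_card_le (h ▸ subset_union_right) (by omega)).symm⟩
    have := card_lt_card hss
    omega
  have hT : ∀ T ∈ ({T ∈ F | e ⊆ T ∧ f ⊆ T} : Finset _), T = e ∪ f := fun T hT => by
    obtain ⟨hTF, heT, hfT⟩ := mem_filter.mp hT
    exact (eq_of_subset_of_card_le (union_subset heT hfT) (by rw [hF T hTF]; exact hunion)).symm
  exact card_le_one.mpr fun T₁ h₁ T₂ h₂ => (hT T₁ h₁).trans (hT T₂ h₂).symm

lemma sum_card_filter_subset_subset (hF : ∀ T ∈ F, T.card = 3) (he : e ∈ edgesOf F) :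
    ∑ f ∈ (edgesOf F).erase e, #{T ∈ F | e ⊆ T ∧ f ⊆ T} = 2 * edgeDeg F e := by
  calc ∑ f ∈ (edgesOf F).erase e, #{T ∈ F | e ⊆ T ∧ f ⊆ T}
      = ∑ T ∈ F, #{f ∈ (edgesOf F).erase e | e ⊆ T ∧ f ⊆ T} :=
        sum_card_bipartiteAbove_eq_sum_card_bipartiteBelow (s := (edgesOf F).erase e) (t := F)
          (fun f T => e ⊆ T ∧ f ⊆ T)
    _ = ∑ T ∈ F, if e ⊆ T then 2 else 0 := sum_congr rfl fun T hT => by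
        split_ifs with heT
        · rw [filter_congr fun f _ => and_iff_right heT, filter_erase,
            filter_edgesOf_subset hT, card_erase_of_mem
              (mem_powersetCard.mpr ⟨heT, card_eq_two_of_mem_edgesOf he⟩),
            card_powersetCard, hF T hT]
          rfl
        · exact card_eq_zero.mpr (filter_false_of_mem fun f _ h => heT h.1)
    _ = 2 * edgeDeg F e := by rw [← sum_filter, sum_const, smul_eq_mul, mul_comm, edgeDeg]

lemma sum_triSign_mul_self (hF : ∀ T ∈ F, T.card = 3) (he : e.card = 2) :
    ∑ T ∈ F, triSign T e * triSign T e = edgeDeg F e := by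
  rw [edgeDeg, natCast_card_filter]
  refine sum_congr rfl fun T hT => ?_
  split_ifs with heT
  · exact triSign_mul_self heT he (hF T hT)
  · rw [triSign_of_not_subset heT, mul_zero]

lemma abs_sum_triSign_mul_le :
    |∑ T ∈ F, triSign T f * triSign T e| ≤ #{T ∈ F | e ⊆ T ∧ f ⊆ T} := by
  rw [natCast_card_filter]
  refine (abs_sum_le_sum_abs _ _).trans (sum_le_sum fun T _ => ?_)
  split_ifs with h
  · rw [abs_mul]
    exact mul_le_one₀ abs_triSign_le_one (abs_nonneg _) abs_triSign_le_one
  · rcases not_and_or.mp h with h | h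
    · rw [triSign_of_not_subset h, mul_zero, abs_zero]
    · rw [triSign_of_not_subset h, zero_mul, abs_zero]

lemma sum_sq_sum_triSign_mul_le (hF : ∀ T ∈ F, T.card = 3) (he : e ∈ edgesOf F) :
    ∑ f ∈ edgesOf F, (∑ T ∈ F, triSign T f * triSign T e) ^ 2
      ≤ edgeDeg F e * (edgeDeg F e + 2) := by
  have hoff : ∀ f ∈ (edgesOf F).erase e,
      (∑ T ∈ F, triSign T f * triSign T e) ^ 2 ≤ #{T ∈ F | e ⊆ T ∧ f ⊆ T} := fun f hf => by
    have hle := abs_sum_triSign_mul_le (F := F) (e := e) (f := f)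
    have hle_one : (#{T ∈ F | e ⊆ T ∧ f ⊆ T} : ℝ) ≤ 1 := by
      exact_mod_cast card_filter_subset_subset_le_one hF (card_eq_two_of_mem_edgesOf he)
        (card_eq_two_of_mem_edgesOf (mem_of_mem_erase hf)) (ne_of_mem_erase hf).symm
    rw [← sq_abs]
    nlinarith [abs_nonneg (∑ T ∈ F, triSign T f * triSign T e)]
  have hsum := sum_le_sum hoff
  rw [← Nat.cast_sum, sum_card_filter_subset_subset hF he] at hsum
  rw [← add_sum_erase _ _ he, sq, sum_triSign_mul_self hF (card_eq_two_of_mem_edgesOf he)]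
  push_cast at hsum
  linarith

lemma transpose_mul_delta1_apply (f e : {e // e ∈ edgesOf F}) :
    ((delta1 F)ᵀ * delta1 F) f e = ∑ T ∈ F, triSign T f * triSign T e := by
  simp only [Matrix.mul_apply, delta1, Matrix.transpose_apply, Matrix.of_apply]
  exact sum_attach F fun T => triSign T f * triSign T e

lemma lam_le_edgeDeg_add_two (hF : ∀ T ∈ F, T.card = 3) (he : e ∈ edgesOf F) :
    lam F ≤ edgeDeg F e + 2 := by
  set G := (delta1 F)ᵀ * delta1 F
  have hG : G.IsHermitian := by
    simpa [conjTranspose_eq_transpose_of_trivial] using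
      isHermitian_conjTranspose_mul_self (delta1 F)
  set x : {e // e ∈ edgesOf F} → ℝ := Pi.single ⟨e, he⟩ 1
  have hGx : ∀ f, (G *ᵥ x) f = ∑ T ∈ F, triSign T f * triSign T e := fun f => by
    rw [mulVec_single_one, col_apply]
    exact transpose_mul_delta1_apply f ⟨e, he⟩
  have hdiag : x ⬝ᵥ (G *ᵥ x) = edgeDeg F e := by
    rw [single_one_dotProduct, hGx, sum_triSign_mul_self hF (card_eq_two_of_mem_edgesOf he)]
  have hcol : (G *ᵥ x) ⬝ᵥ (G *ᵥ x) ≤ edgeDeg F e * (edgeDeg F e + 2) := by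
    rw [dotProduct]
    simp only [hGx, ← sq]
    exact (sum_coe_sort (edgesOf F) fun f => (∑ T ∈ F, triSign T f * triSign T e) ^ 2).trans_le
      (sum_sq_sum_triSign_mul_le hF he)
  have hd : (0 : ℝ) < edgeDeg F e := by
    obtain ⟨T, hT, heT, -⟩ := mem_edgesOf.mp he
    exact_mod_cast card_pos.mpr ⟨T, mem_filter.mpr ⟨hT, heT⟩⟩
  have hray := hG.lambdaMinPos_mul_le (hdiag ▸ hd)
  rw [hdiag] at hray
  exact le_of_mul_le_mul_right ((hray.trans hcol).trans_eq (mul_comm _ _)) hd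

lemma exists_mem_edgesOf_of_mem_vertsOf (hF : ∀ T ∈ F, T.card = 3) {x : ℕ}
    (hx : x ∈ vertsOf F) : ∃ e ∈ edgesOf F, x ∈ e := by
  obtain ⟨T, hT, hxT⟩ := mem_biUnion.mp hx
  obtain ⟨y, hyT, hyx⟩ := exists_mem_ne (by rw [hF T hT]; norm_num) x
  exact ⟨{x, y}, mem_edgesOf.mpr ⟨T, hT, insert_subset hxT (singleton_subset_iff.mpr hyT),
    card_pair hyx.symm⟩, mem_insert_self x {y}⟩

lemma edgeDeg_lt_vertDeg (hF : ∀ T ∈ F, T.card = 3) (he : e ∈ edgesOf F) {x : ℕ}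
    (hx : x ∈ e) : edgeDeg F e < vertDeg F x := by
  obtain ⟨y, hye, hyx⟩ := exists_mem_ne (by rw [card_eq_two_of_mem_edgesOf he]; norm_num) x
  have hmem : e ∈ ({f ∈ edgesOf F | x ∈ f} : Finset _) := mem_filter.mpr ⟨he, hx⟩
  have hmaps : Set.MapsTo (fun T : Finset ℕ => T.erase y) ({T ∈ F | e ⊆ T} : Finset _)
      (({f ∈ edgesOf F | x ∈ f} : Finset _).erase e : Finset _) := fun T hT => by
    obtain ⟨hTF, heT⟩ := mem_filter.mp (mem_coe.mp hT)
    refine mem_erase.mpr ⟨fun h : T.erase y = e => notMem_erase y T (h ▸ hye), mem_filter.mpr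
      ⟨mem_edgesOf.mpr ⟨T, hTF, erase_subset y T, ?_⟩, mem_erase.mpr ⟨hyx.symm, heT hx⟩⟩⟩
    rw [card_erase_of_mem (heT hye), hF T hTF]
  have hinj : Set.InjOn (fun T : Finset ℕ => T.erase y) ({T ∈ F | e ⊆ T} : Finset _) :=
    fun T₁ h₁ T₂ h₂ h => by
      rw [← insert_erase ((mem_filter.mp (mem_coe.mp h₁)).2 hye),
        ← insert_erase ((mem_filter.mp (mem_coe.mp h₂)).2 hye)]
      exact congrArg (insert y) h
  have hle := card_le_card_of_injOn _ hmaps hinj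
  rw [card_erase_of_mem hmem] at hle
  have hpos := card_pos.mpr ⟨e, hmem⟩
  unfold edgeDeg vertDeg
  omega

lemma ceil_lam_le_edgeDeg_add_two (hF : ∀ T ∈ F, T.card = 3) (he : e ∈ edgesOf F) :
    ⌈lam F⌉ ≤ edgeDeg F e + 2 :=
  Int.ceil_le.mpr (by exact_mod_cast lam_le_edgeDeg_add_two hF he)

lemma card_edgesOf_mul_le (hF : ∀ T ∈ F, T.card = 3) :
    (#(edgesOf F) : ℤ) * (⌈lam F⌉ - 2) ≤ 3 * #F := by
  have h := card_nsmul_le_sum (edgesOf F) (fun e => (edgeDeg F e : ℤ)) (⌈lam F⌉ - 2)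
    fun e he => by linarith [ceil_lam_le_edgeDeg_add_two hF he]
  rw [nsmul_eq_mul, ← Nat.cast_sum, sum_edgeDeg hF] at h
  exact_mod_cast h

lemma card_vertsOf_mul_le (hF : ∀ T ∈ F, T.card = 3) :
    (#(vertsOf F) : ℤ) * (⌈lam F⌉ - 1) ≤ 2 * #(edgesOf F) := by
  have h := card_nsmul_le_sum (vertsOf F) (fun x => (vertDeg F x : ℤ)) (⌈lam F⌉ - 1)
    fun x hx => by
      obtain ⟨e, he, hxe⟩ := exists_mem_edgesOf_of_mem_vertsOf hF hx
      have hlt : (edgeDeg F e : ℤ) + 1 ≤ vertDeg F x := by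
        exact_mod_cast edgeDeg_lt_vertDeg hF he hxe
      linarith [ceil_lam_le_edgeDeg_add_two hF he]
  rw [nsmul_eq_mul, ← Nat.cast_sum, sum_vertDeg] at h
  exact_mod_cast h

end TriangleFamily

theorem stmt4_general (F : Finset (Finset ℕ)) (hF : IsTriFam F) (t : ℕ) (hcard : F.card = t)
    (hlam : 2 < lam F) :
    ((vertsOf F).card : ℝ) ≤ 2 * (edgesOf F).card / ((⌈lam F⌉ : ℝ) - 1) ∧
    ((edgesOf F).card : ℝ) ≤ 3 * t / ((⌈lam F⌉ : ℝ) - 2) ∧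
    ((vertsOf F).card : ℝ) ≤ 6 * t / (((⌈lam F⌉ : ℝ) - 1) * ((⌈lam F⌉ : ℝ) - 2)) := by
  have hL : (2 : ℝ) < ⌈lam F⌉ := by exact_mod_cast Int.lt_ceil.mpr (by exact_mod_cast hlam)
  have hE : (#(edgesOf F) : ℝ) * (⌈lam F⌉ - 2) ≤ 3 * t := by
    exact_mod_cast hcard ▸ card_edgesOf_mul_le hF.2
  have hV : (#(vertsOf F) : ℝ) * (⌈lam F⌉ - 1) ≤ 2 * #(edgesOf F) := by
    exact_mod_cast card_vertsOf_mul_le hF.2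
  have h1 : (0 : ℝ) < ⌈lam F⌉ - 1 := by linarith
  have h2 : (0 : ℝ) < ⌈lam F⌉ - 2 := by linarith
  refine ⟨(le_div_iff₀ h1).mpr hV, (le_div_iff₀ h2).mpr hE, (le_div_iff₀ (mul_pos h1 h2)).mpr ?_⟩
  calc (#(vertsOf F) : ℝ) * ((⌈lam F⌉ - 1) * (⌈lam F⌉ - 2))
      ≤ 2 * #(edgesOf F) * (⌈lam F⌉ - 2) := by
        rw [← mul_assoc]; exact mul_le_mul_of_nonneg_right hV h2.le
    _ ≤ 6 * t := by linarith

/-- Counting lemma: if `|𝒯| = t > 0` and `λ(𝒯) > 2`, then with `v` and `e` the number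
of vertices and edges of `Γ₀(𝒯)`, one has `v ≤ 2e/(⌈λ⌉-1)`, `e ≤ 3t/(⌈λ⌉-2)` and
`v ≤ 6t/((⌈λ⌉-1)(⌈λ⌉-2))`. -/
theorem stmt4 (F : Finset (Finset ℕ)) (hF : IsTriFam F) (t : ℕ) (hcard : F.card = t)
    (ht : 0 < t) (hlam : 2 < lam F) :
    ((vertsOf F).card : ℝ) ≤ 2 * (edgesOf F).card / ((⌈lam F⌉ : ℝ) - 1) ∧
    ((edgesOf F).card : ℝ) ≤ 3 * t / ((⌈lam F⌉ : ℝ) - 2) ∧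
    ((vertsOf F).card : ℝ) ≤ 6 * t / (((⌈lam F⌉ : ℝ) - 1) * ((⌈lam F⌉ : ℝ) - 2)) :=
  stmt4_general F hF t hcard hlam
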